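/- arXiv:2005.11308 — 6 statements merged into one kernel-verified Lean document; each statement's English description precedes it below -/
import Mathlib

section
/- The closed-loop trajectory generated by Algorithm 1 satisfies the constraints at all times: x_t ∈ X and u_t ∈ U for every t ≥ 0. Moreover, for every t ≥ 1 the updated predicted input sequence û_t is feasible, i.e. û_t ∈ U^μ and applying û_t from the state x_t keeps the state in X for the next μ steps. -/
open Finset RealInnerProductSpace

/-- The state reached after applying the first `k` inputs of the sequence `u`
to the linear system `x⁺ = A x + B u` starting from `x`. -/
def stateSeq {E F : Type*} [AddCommGroup E] (A : E → E) (B : F → E)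
    (x : E) (u : ℕ → F) : ℕ → E
  | 0 => x
  | k + 1 => A (stateSeq A B x u k) + B (u k)

/-- An input sequence `u` (its first `μ` entries) is feasible from `x`:
all applied inputs lie in `U` and all visited states lie in `X`. -/
def Feasible {E F : Type*} [AddCommGroup E] (A : E → E) (B : F → E)
    (X : Set E) (U : Set F) (μ : ℕ) (x : E) (u : ℕ → F) : Prop :=
  (∀ k < μ, u k ∈ U) ∧ ∀ k ≤ μ, stateSeq A B x u k ∈ X

section Aux

variable {n m : ℕ}

/-- `stateSeq` only depends on the first `k` inputs. -/
lemma stateSeq_congr (A : EuclideanSpace ℝ (Fin n) →L[ℝ] EuclideanSpace ℝ (Fin n))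
    (B : EuclideanSpace ℝ (Fin m) →L[ℝ] EuclideanSpace ℝ (Fin n))
    (x : EuclideanSpace ℝ (Fin n)) (u w : ℕ → EuclideanSpace ℝ (Fin m)) (k : ℕ)
    (h : ∀ i < k, u i = w i) :
    stateSeq (⇑A) (⇑B) x u k = stateSeq (⇑A) (⇑B) x w k := by
  induction k with
  | zero => rfl
  | succ k ih =>
    simp only [stateSeq]
    rw [ih (fun i hi => h i (by omega)), h k (by omega)]

/-- Shifting the input sequence by one. -/
lemma stateSeq_shift (A : EuclideanSpace ℝ (Fin n) →L[ℝ] EuclideanSpace ℝ (Fin n))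
    (B : EuclideanSpace ℝ (Fin m) →L[ℝ] EuclideanSpace ℝ (Fin n))
    (x : EuclideanSpace ℝ (Fin n)) (u w : ℕ → EuclideanSpace ℝ (Fin m)) (k : ℕ)
    (h : ∀ i < k, w i = u (i + 1)) :
    stateSeq (⇑A) (⇑B) (A x + B (u 0)) w k = stateSeq (⇑A) (⇑B) x u (k + 1) := by
  induction k with
  | zero => rfl
  | succ k ih =>
    simp only [stateSeq]
    rw [ih (fun i hi => h i (by omega)), h k (by omega)]
    rfl

/-- The state map is affine in the input sequence. -/
lemma stateSeq_comb (A : EuclideanSpace ℝ (Fin n) →L[ℝ] EuclideanSpace ℝ (Fin n))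
    (B : EuclideanSpace ℝ (Fin m) →L[ℝ] EuclideanSpace ℝ (Fin n))
    (x : EuclideanSpace ℝ (Fin n)) (u w : ℕ → EuclideanSpace ℝ (Fin m)) (a : ℝ) (k : ℕ) :
    stateSeq (⇑A) (⇑B) x (fun i => (1 - a) • u i + a • w i) k
      = (1 - a) • stateSeq (⇑A) (⇑B) x u k + a • stateSeq (⇑A) (⇑B) x w k := by
  induction k with
  | zero =>
    simp only [stateSeq]
    module
  | succ k ih =>
    simp only [stateSeq, ih, map_add, map_smul, smul_add]
    abel

/-- Convex combinations stay inside a polyhedron. -/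
lemma comb_mem {N : ℕ} {ι : Type*} (C : ι → EuclideanSpace ℝ (Fin N)) (d : ι → ℝ)
    {p q : EuclideanSpace ℝ (Fin N)} (hp : ∀ i, ⟪C i, p⟫ ≤ d i) (hq : ∀ i, ⟪C i, q⟫ ≤ d i)
    {a : ℝ} (h0 : 0 ≤ a) (h1 : a ≤ 1) :
    ∀ i, ⟪C i, (1 - a) • p + a • q⟫ ≤ d i := by
  intro i
  rw [inner_add_right, real_inner_smul_right, real_inner_smul_right]
  nlinarith [hp i, hq i]

end Aux

/-- **Constraint satisfaction of Algorithm 1.** Under Assumptions 1–5 and the step-size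
conditions, the closed loop generated by Algorithm 1 satisfies `x_t ∈ X` and `u_t ∈ U`
for all `t ≥ 0`, and for every `t ≥ 1` the updated predicted input sequence `uhat_t`
is feasible: its first `μ` inputs lie in `U` and applying it from `x_t` keeps the
state in `X` for the next `μ` steps. -/
theorem constraint_satisfaction_of_algorithm_one
    -- dimensions and system matrices (induced Euclidean operator norms)
    {n m cx cu : ℕ}
    (A : EuclideanSpace ℝ (Fin n) →L[ℝ] EuclideanSpace ℝ (Fin n))
    (B : EuclideanSpace ℝ (Fin m) →L[ℝ] EuclideanSpace ℝ (Fin n))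
    -- polytopic constraint sets X = {Cx z ≤ dx}, U = {Cu z ≤ du}, shrunk set X̄
    (Cx : Fin cx → EuclideanSpace ℝ (Fin n)) (dx : Fin cx → ℝ)
    (Cu : Fin cu → EuclideanSpace ℝ (Fin m)) (du : Fin cu → ℝ)
    (X Xbar : Set (EuclideanSpace ℝ (Fin n))) (U : Set (EuclideanSpace ℝ (Fin m)))
    (hX : X = {z | ∀ i, ⟪Cx i, z⟫ ≤ dx i})
    (hU : U = {z | ∀ i, ⟪Cu i, z⟫ ≤ du i})
    (δ : ℝ) (hδ : 0 < δ)
    (hXbar : Xbar = {z | ∀ r : EuclideanSpace ℝ (Fin n), ‖r‖ ≤ 1 →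
        ∀ i, ⟪Cx i, z + δ • r⟫ ≤ dx i})
    (hXcomp : IsCompact X) (hUcomp : IsCompact U)
    (hX0 : (0 : EuclideanSpace ℝ (Fin n)) ∈ interior X)
    (hU0 : (0 : EuclideanSpace ℝ (Fin m)) ∈ interior U)
    -- diameter bounds
    (Dx Du : ℝ)
    (hDx : ∀ a ∈ X, ∀ b ∈ X, ‖a - b‖ ≤ Dx)
    (hDu : ∀ a ∈ U, ∀ b ∈ U, ‖a - b‖ ≤ Du)
    -- cost functions L_t(x,u) = fx t x + fu t u and their regularity
    (fx : ℕ → EuclideanSpace ℝ (Fin n) → ℝ) (fu : ℕ → EuclideanSpace ℝ (Fin m) → ℝ)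
    (αx lx Lx αu lu Lu : ℝ)
    (hαx : 0 < αx) (hlx : αx ≤ lx) (hαu : 0 < αu) (hlu : αu ≤ lu)
    (hfxconv : ∀ t, StrongConvexOn Set.univ αx (fx t))
    (hfuconv : ∀ t, StrongConvexOn Set.univ αu (fu t))
    (hfxdiff : ∀ t z, DifferentiableAt ℝ (fx t) z)
    (hfudiff : ∀ t z, DifferentiableAt ℝ (fu t) z)
    (hfxsmooth : ∀ t a b, ‖gradient (fx t) a - gradient (fx t) b‖ ≤ lx * ‖a - b‖)
    (hfusmooth : ∀ t a b, ‖gradient (fu t) a - gradient (fu t) b‖ ≤ lu * ‖a - b‖)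
    (hfxlip : ∀ t, ∀ a ∈ X, ∀ b ∈ X, |fx t a - fx t b| ≤ Lx * ‖a - b‖)
    (hfulip : ∀ t, ∀ a ∈ U, ∀ b ∈ U, |fu t a - fu t b| ≤ Lu * ‖a - b‖)
    -- pointwise minimizers θ_t, η_t form feasible steady states
    (θ : ℕ → EuclideanSpace ℝ (Fin n)) (η : ℕ → EuclideanSpace ℝ (Fin m))
    (hθX : ∀ t, θ t ∈ X) (hθmin : ∀ t, ∀ a ∈ X, fx t (θ t) ≤ fx t a)
    (hθbar : ∀ t, θ t ∈ Xbar)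
    (hηU : ∀ t, η t ∈ U) (hηmin : ∀ t, ∀ b ∈ U, fu t (η t) ≤ fu t b)
    (hsteady : ∀ t, θ t = A (θ t) + B (η t))
    -- bound on the instability of A : ‖A‖ < (lx+αx)/(lx−αx)
    (hAnorm : ‖A‖ * (lx - αx) < lx + αx)
    -- controllability under constraints within μ steps
    (μ : ℕ) (hμ : 1 ≤ μ)
    (hreach : ∀ a ∈ X, ∀ b ∈ X, ∃ us : ℕ → EuclideanSpace ℝ (Fin m),
        Feasible (⇑A) (⇑B) X U μ a us ∧ stateSeq (⇑A) (⇑B) a us μ = b)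
    -- step sizes
    (γu γx : ℝ) (hγu0 : 0 < γu) (hγu : γu ≤ 2 / (lu + αu))
    (hγx0 : (‖A‖ - 1) / (‖A‖ * αx) < γx) (hγx : γx ≤ 2 / (lx + αx))
    -- Algorithm 1: trajectories and internal sequences
    (x : ℕ → EuclideanSpace ℝ (Fin n)) (u v : ℕ → EuclideanSpace ℝ (Fin m))
    (uhat vhat g : ℕ → ℕ → EuclideanSpace ℝ (Fin m))
    (xhat xpi : ℕ → EuclideanSpace ℝ (Fin n)) (α : ℕ → ℝ)
    -- initialization: x_0 ∈ X, v_0 ∈ U, feasible uhat_0, and x̂_μ from (x_0, uhat_0)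
    (hx0 : x 0 ∈ X) (hv0 : v 0 ∈ U)
    (hu0feas : Feasible (⇑A) (⇑B) X U μ (x 0) (uhat 0))
    (hxhat0 : xhat μ = stateSeq (⇑A) (⇑B) (x 0) (uhat 0) μ)
    -- closed loop: u_t = uhat_t^{(1)}, x_{t+1} = A x_t + B u_t
    (hdyn : ∀ t, x (t + 1) = A (x t) + B (u t))
    (huout : ∀ t, u t = uhat t 0)
    -- (2): v_t = Π_U (v_{t−1} − γu ∇fu_{t−1}(v_{t−1}))
    (hv : ∀ t, 1 ≤ t → v t ∈ U ∧ ∀ w ∈ U,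
        ‖v t - (v (t - 1) - γu • gradient (fu (t - 1)) (v (t - 1)))‖ ≤
          ‖w - (v (t - 1) - γu • gradient (fu (t - 1)) (v (t - 1)))‖)
    -- (3): vhat_t = (uhat_{t−1}^{(2)}, …, uhat_{t−1}^{(μ)}, v_t)  (0-indexed components)
    (hvhat : ∀ t, 1 ≤ t →
        (∀ i, i + 1 < μ → vhat t i = uhat (t - 1) (i + 1)) ∧ vhat t (μ - 1) = v t)
    -- (4): x̂_{t+μ} = A^μ x_t + S_c vhat_t
    (hxhat : ∀ t, 1 ≤ t → xhat (t + μ) = stateSeq (⇑A) (⇑B) (x t) (vhat t) μ)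
    -- (5): xπ_{t+μ} = Π_X̄ (x̂_{t+μ} − γx ∇fx_{t−1}(x̂_{t+μ}))
    (hxpi : ∀ t, 1 ≤ t → xpi (t + μ) ∈ Xbar ∧ ∀ z ∈ Xbar,
        ‖xpi (t + μ) - (xhat (t + μ) - γx • gradient (fx (t - 1)) (xhat (t + μ)))‖ ≤
          ‖z - (xhat (t + μ) - γx • gradient (fx (t - 1)) (xhat (t + μ)))‖)
    -- (6)-(8): α_t and the auxiliary feasible sequence g_t
    (hcase0 : ∀ t, 1 ≤ t → xhat (t + μ) = xpi (t + μ) → α t = 0 ∧ g t = vhat t)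
    (hcase1 : ∀ t, 1 ≤ t → xhat (t + μ) ≠ xpi (t + μ) →
        α t = 1 / (1 + δ / ‖xhat (t + μ) - xpi (t + μ)‖) ∧
        Feasible (⇑A) (⇑B) X U μ (x t) (g t) ∧
        stateSeq (⇑A) (⇑B) (x t) (g t) μ =
          xpi (t + μ) + (δ / ‖xhat (t + μ) - xpi (t + μ)‖) • (xpi (t + μ) - xhat (t + μ)))
    -- (9): uhat_t = (1 − α_t) vhat_t + α_t g_t
    (huhat : ∀ t, 1 ≤ t → ∀ i, uhat t i = (1 - α t) • vhat t i + α t • g t i)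
    :
    (∀ t : ℕ, x t ∈ X) ∧ (∀ t : ℕ, u t ∈ U) ∧
      ∀ t : ℕ, 1 ≤ t → Feasible (⇑A) (⇑B) X U μ (x t) (uhat t) := by
  -- `Xbar ⊆ X` (take `r = 0`)
  have hsub : Xbar ⊆ X := by
    intro z hz
    rw [hXbar] at hz
    rw [hX]
    intro i
    have h0 := hz 0 (by simp) i
    simpa using h0
  -- main induction: `uhat t` is feasible from `x t` for all `t`
  have main : ∀ t, Feasible (⇑A) (⇑B) X U μ (x t) (uhat t) := by
    intro t
    induction t with
    | zero => exact hu0feas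
    | succ t ih =>
      have ht1 : 1 ≤ t + 1 := by omega
      have hvh := hvhat (t + 1) ht1
      -- shift identity for the states generated by `vhat (t+1)`
      have hshift : ∀ k < μ, stateSeq (⇑A) (⇑B) (x (t + 1)) (vhat (t + 1)) k
          = stateSeq (⇑A) (⇑B) (x t) (uhat t) (k + 1) := by
        intro k hk
        have hx1' : x (t + 1) = A (x t) + B (uhat t 0) := by rw [hdyn t, huout t]
        rw [hx1']
        apply stateSeq_shift
        intro i hi
        have e := hvh.1 i (by omega)
        simpa using e
      -- the inputs of `vhat (t+1)` lie in `U`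
      have hvhatU : ∀ i < μ, vhat (t + 1) i ∈ U := by
        intro i hi
        by_cases h : i + 1 < μ
        · have e := hvh.1 i h
          simp only [Nat.add_sub_cancel] at e
          rw [e]
          exact ih.1 (i + 1) h
        · have hi' : i = μ - 1 := by omega
          rw [hi', hvh.2]
          exact (hv (t + 1) ht1).1
      -- the first `μ - 1` states of `vhat (t+1)` lie in `X`
      have hvhatX : ∀ k < μ, stateSeq (⇑A) (⇑B) (x (t + 1)) (vhat (t + 1)) k ∈ X := by
        intro k hk
        rw [hshift k hk]
        exact ih.2 (k + 1) (by omega)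
      have hxe := hxhat (t + 1) ht1
      by_cases hc : xhat (t + 1 + μ) = xpi (t + 1 + μ)
      · -- case (6): no correction needed, `uhat = vhat`
        obtain ⟨hα0, _⟩ := hcase0 (t + 1) ht1 hc
        have huv : ∀ i, uhat (t + 1) i = vhat (t + 1) i := by
          intro i
          rw [huhat (t + 1) ht1 i, hα0]
          simp
        constructor
        · intro k hk
          rw [huv k]
          exact hvhatU k hk
        · intro k hk
          rw [stateSeq_congr A B _ _ _ k (fun i _ => huv i)]
          rcases Nat.lt_or_ge k μ with h | h
          · exact hvhatX k h
          · have hkμ : k = μ := by omega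
            rw [hkμ, ← hxe, hc]
            exact hsub (hxpi (t + 1) ht1).1
      · -- case (7)-(8): correction towards `xpi`
        obtain ⟨hαv, hgfeas, hgterm⟩ := hcase1 (t + 1) ht1 hc
        set s : ℝ := ‖xhat (t + 1 + μ) - xpi (t + 1 + μ)‖ with hs
        have hs0 : 0 < s := by
          rw [hs]
          exact norm_sub_pos_iff.mpr hc
        have hdb : 0 < δ / s := div_pos hδ hs0
        have hα0 : 0 ≤ α (t + 1) := by rw [hαv]; positivity
        have hα1 : α (t + 1) ≤ 1 := by
          rw [hαv, div_le_one (by linarith)]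
          linarith
        have hucomb := huhat (t + 1) ht1
        constructor
        · intro k hk
          rw [hucomb k, hU]
          have h1 : ∀ i, ⟪Cu i, vhat (t + 1) k⟫ ≤ du i := by
            have := hvhatU k hk
            rwa [hU] at this
          have h2 : ∀ i, ⟪Cu i, g (t + 1) k⟫ ≤ du i := by
            have := hgfeas.1 k hk
            rwa [hU] at this
          exact comb_mem Cu du h1 h2 hα0 hα1
        · intro k hk
          have hstate : stateSeq (⇑A) (⇑B) (x (t + 1)) (uhat (t + 1)) k
              = (1 - α (t + 1)) • stateSeq (⇑A) (⇑B) (x (t + 1)) (vhat (t + 1)) k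
                + α (t + 1) • stateSeq (⇑A) (⇑B) (x (t + 1)) (g (t + 1)) k := by
            rw [stateSeq_congr A B _ _ _ k (fun i _ => hucomb i)]
            exact stateSeq_comb A B _ _ _ _ k
          rw [hstate]
          rcases Nat.lt_or_ge k μ with h | h
          · -- intermediate states: convex combination of states in `X`
            rw [hX]
            have h1 : ∀ i, ⟪Cx i, stateSeq (⇑A) (⇑B) (x (t + 1)) (vhat (t + 1)) k⟫ ≤ dx i := by
              have := hvhatX k h
              rwa [hX] at this
            have h2 : ∀ i, ⟪Cx i, stateSeq (⇑A) (⇑B) (x (t + 1)) (g (t + 1)) k⟫ ≤ dx i := by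
              have := hgfeas.2 k (by omega)
              rwa [hX] at this
            exact comb_mem Cx dx h1 h2 hα0 hα1
          · -- terminal state: the combination is exactly `xpi ∈ Xbar ⊆ X`
            have hkμ : k = μ := by omega
            rw [hkμ, ← hxe, hgterm]
            have hne : (1 : ℝ) + δ / s ≠ 0 := by positivity
            have key : (1 - α (t + 1)) • xhat (t + 1 + μ)
                + α (t + 1) • (xpi (t + 1 + μ) + (δ / s) • (xpi (t + 1 + μ) - xhat (t + 1 + μ)))
                = xpi (t + 1 + μ) := by
              rw [hαv]
              match_scalars <;> field_simp <;> ring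
            rw [key]
            exact hsub (hxpi (t + 1) ht1).1
  -- assemble the three conclusions
  have hx1 : ∀ t, x (t + 1) = stateSeq (⇑A) (⇑B) (x t) (uhat t) 1 := by
    intro t
    simp only [stateSeq, hdyn t, huout t]
  refine ⟨?_, ?_, fun t _ => main t⟩
  · intro t
    cases t with
    | zero => exact hx0
    | succ t =>
      rw [hx1 t]
      exact (main t).2 1 hμ
  · intro t
    rw [huout t]
    exact (main t).1 0 (by omega)
end

section
/- For every t ≥ μ, the per-step prediction error of Algorithm 1 satisfies ‖x̂_{t+μ} − x_{t+μ}‖ ≤ ‖S_c‖ ( Σ_{i=0}^{μ−1} ‖v_{t−i} − η_{t−1−i}‖ + μ D_u Σ_{j=1−μ}^{μ−1} α_{t+j} ), where x_{t+μ} is the closed-loop state reached by applying the inputs u_t, …, u_{t+μ−1} from x_t. -/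
open Finset RealInnerProductSpace

set_option synthInstance.maxHeartbeats 400000 in
set_option maxHeartbeats 2000000 in
/-- The μ-step reachability matrix `S_c = (B, AB, …, A^{μ−1}B)` as a continuous linear
map from the stacked (Euclidean) input space to the state space:
`u ↦ Σ_{i=0}^{μ−1} A^{μ−1−i} B u_i` (so `‖ScMap A B μ‖` is the induced norm `‖S_c‖`). -/
noncomputable def ScMap {n m : ℕ} (A : EuclideanSpace ℝ (Fin n) →L[ℝ] EuclideanSpace ℝ (Fin n))
    (B : EuclideanSpace ℝ (Fin m) →L[ℝ] EuclideanSpace ℝ (Fin n)) (μ : ℕ) :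
    PiLp 2 (fun _ : Fin μ => EuclideanSpace ℝ (Fin m)) →L[ℝ] EuclideanSpace ℝ (Fin n) :=
  LinearMap.toContinuousLinearMap
    { toFun := fun w => ∑ i : Fin μ, (A ^ (μ - 1 - (i : ℕ))) (B (w i))
      map_add' := by
        intro a b
        simp [Finset.sum_add_distrib]
      map_smul' := by
        intro c a
        simp [Finset.smul_sum] }


lemma stateSeq_formula {n m : ℕ} (A : EuclideanSpace ℝ (Fin n) →L[ℝ] EuclideanSpace ℝ (Fin n))
    (B : EuclideanSpace ℝ (Fin m) →L[ℝ] EuclideanSpace ℝ (Fin n))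
    (x : EuclideanSpace ℝ (Fin n)) (u : ℕ → EuclideanSpace ℝ (Fin m)) :
    ∀ k, stateSeq (⇑A) (⇑B) x u k
      = (A ^ k) x + ∑ j ∈ Finset.range k, (A ^ (k - 1 - j)) (B (u j)) := by
  intro k
  induction k with
  | zero => simp [stateSeq]
  | succ k ih =>
    rw [show stateSeq (⇑A) (⇑B) x u (k+1) = A (stateSeq (⇑A) (⇑B) x u k) + B (u k) from rfl,
      ih, Finset.sum_range_succ, map_add, map_sum]
    simp only [Nat.add_sub_cancel, Nat.sub_self, pow_zero, ContinuousLinearMap.one_apply]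
    have h1 : A ((A ^ k) x) = (A ^ (k+1)) x := by
      rw [pow_succ']; rfl
    have h2 : ∀ j ∈ Finset.range k, A ((A ^ (k - 1 - j)) (B (u j)))
        = (A ^ (k - j)) (B (u j)) := by
      intro j hj
      rw [Finset.mem_range] at hj
      have : k - j = (k - 1 - j) + 1 := by omega
      rw [this, pow_succ']; rfl
    rw [h1, Finset.sum_congr rfl h2]
    abel

lemma pilp_norm_le_sum {μ m : ℕ} (w : PiLp 2 (fun _ : Fin μ => EuclideanSpace ℝ (Fin m))) :
    ‖w‖ ≤ ∑ i : Fin μ, ‖w i‖ := by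
  have h1 : ‖w‖ ^ 2 = ∑ i : Fin μ, ‖w i‖ ^ 2 := PiLp.norm_sq_eq_of_L2 _ w
  have h2 : ∑ i : Fin μ, ‖w i‖ ^ 2 ≤ (∑ i : Fin μ, ‖w i‖) ^ 2 :=
    Finset.sum_sq_le_sq_sum_of_nonneg (fun i _ => norm_nonneg _)
  have h3 : (0:ℝ) ≤ ∑ i : Fin μ, ‖w i‖ := Finset.sum_nonneg (fun i _ => norm_nonneg _)
  nlinarith [norm_nonneg w]

/-- **Per-step prediction error bound of Algorithm 1.** Under Assumptions 1–5 and the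
step-size conditions, for every `t ≥ μ`:
`‖x̂_{t+μ} − x_{t+μ}‖ ≤ ‖S_c‖ (Σ_{i=0}^{μ−1} ‖v_{t−i} − η_{t−1−i}‖
  + μ Du Σ_{j=1−μ}^{μ−1} α_{t+j})`,
where `x_{t+μ}` is the closed-loop state reached by applying `u_t, …, u_{t+μ−1}` from `x_t`
(here the index set `{t+j : 1−μ ≤ j ≤ μ−1}` is written as `Icc (t+1−μ) (t+μ−1)`). -/
theorem per_step_prediction_error_bound
    -- dimensions and system matrices (induced Euclidean operator norms)
    {n m cx cu : ℕ}
    (A : EuclideanSpace ℝ (Fin n) →L[ℝ] EuclideanSpace ℝ (Fin n))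
    (B : EuclideanSpace ℝ (Fin m) →L[ℝ] EuclideanSpace ℝ (Fin n))
    -- polytopic constraint sets X = {Cx z ≤ dx}, U = {Cu z ≤ du}, shrunk set X̄
    (Cx : Fin cx → EuclideanSpace ℝ (Fin n)) (dx : Fin cx → ℝ)
    (Cu : Fin cu → EuclideanSpace ℝ (Fin m)) (du : Fin cu → ℝ)
    (X Xbar : Set (EuclideanSpace ℝ (Fin n))) (U : Set (EuclideanSpace ℝ (Fin m)))
    (hX : X = {z | ∀ i, ⟪Cx i, z⟫ ≤ dx i})
    (hU : U = {z | ∀ i, ⟪Cu i, z⟫ ≤ du i})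
    (δ : ℝ) (hδ : 0 < δ)
    (hXbar : Xbar = {z | ∀ r : EuclideanSpace ℝ (Fin n), ‖r‖ ≤ 1 →
        ∀ i, ⟪Cx i, z + δ • r⟫ ≤ dx i})
    (hXcomp : IsCompact X) (hUcomp : IsCompact U)
    (hX0 : (0 : EuclideanSpace ℝ (Fin n)) ∈ interior X)
    (hU0 : (0 : EuclideanSpace ℝ (Fin m)) ∈ interior U)
    -- diameter bounds
    (Dx Du : ℝ)
    (hDx : ∀ a ∈ X, ∀ b ∈ X, ‖a - b‖ ≤ Dx)
    (hDu : ∀ a ∈ U, ∀ b ∈ U, ‖a - b‖ ≤ Du)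
    -- cost functions L_t(x,u) = fx t x + fu t u and their regularity
    (fx : ℕ → EuclideanSpace ℝ (Fin n) → ℝ) (fu : ℕ → EuclideanSpace ℝ (Fin m) → ℝ)
    (αx lx Lx αu lu Lu : ℝ)
    (hαx : 0 < αx) (hlx : αx ≤ lx) (hαu : 0 < αu) (hlu : αu ≤ lu)
    (hfxconv : ∀ t, StrongConvexOn Set.univ αx (fx t))
    (hfuconv : ∀ t, StrongConvexOn Set.univ αu (fu t))
    (hfxdiff : ∀ t z, DifferentiableAt ℝ (fx t) z)
    (hfudiff : ∀ t z, DifferentiableAt ℝ (fu t) z)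
    (hfxsmooth : ∀ t a b, ‖gradient (fx t) a - gradient (fx t) b‖ ≤ lx * ‖a - b‖)
    (hfusmooth : ∀ t a b, ‖gradient (fu t) a - gradient (fu t) b‖ ≤ lu * ‖a - b‖)
    (hfxlip : ∀ t, ∀ a ∈ X, ∀ b ∈ X, |fx t a - fx t b| ≤ Lx * ‖a - b‖)
    (hfulip : ∀ t, ∀ a ∈ U, ∀ b ∈ U, |fu t a - fu t b| ≤ Lu * ‖a - b‖)
    -- pointwise minimizers θ_t, η_t form feasible steady states
    (θ : ℕ → EuclideanSpace ℝ (Fin n)) (η : ℕ → EuclideanSpace ℝ (Fin m))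
    (hθX : ∀ t, θ t ∈ X) (hθmin : ∀ t, ∀ a ∈ X, fx t (θ t) ≤ fx t a)
    (hθbar : ∀ t, θ t ∈ Xbar)
    (hηU : ∀ t, η t ∈ U) (hηmin : ∀ t, ∀ b ∈ U, fu t (η t) ≤ fu t b)
    (hsteady : ∀ t, θ t = A (θ t) + B (η t))
    -- bound on the instability of A : ‖A‖ < (lx+αx)/(lx−αx)
    (hAnorm : ‖A‖ * (lx - αx) < lx + αx)
    -- controllability under constraints within μ steps
    (μ : ℕ) (hμ : 1 ≤ μ)
    (hreach : ∀ a ∈ X, ∀ b ∈ X, ∃ us : ℕ → EuclideanSpace ℝ (Fin m),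
        Feasible (⇑A) (⇑B) X U μ a us ∧ stateSeq (⇑A) (⇑B) a us μ = b)
    -- step sizes
    (γu γx : ℝ) (hγu0 : 0 < γu) (hγu : γu ≤ 2 / (lu + αu))
    (hγx0 : (‖A‖ - 1) / (‖A‖ * αx) < γx) (hγx : γx ≤ 2 / (lx + αx))
    -- Algorithm 1: trajectories and internal sequences
    (x : ℕ → EuclideanSpace ℝ (Fin n)) (u v : ℕ → EuclideanSpace ℝ (Fin m))
    (uhat vhat g : ℕ → ℕ → EuclideanSpace ℝ (Fin m))
    (xhat xpi : ℕ → EuclideanSpace ℝ (Fin n)) (α : ℕ → ℝ)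
    -- initialization: x_0 ∈ X, v_0 ∈ U, feasible uhat_0, and x̂_μ from (x_0, uhat_0)
    (hx0 : x 0 ∈ X) (hv0 : v 0 ∈ U)
    (hu0feas : Feasible (⇑A) (⇑B) X U μ (x 0) (uhat 0))
    (hxhat0 : xhat μ = stateSeq (⇑A) (⇑B) (x 0) (uhat 0) μ)
    -- closed loop: u_t = uhat_t^{(1)}, x_{t+1} = A x_t + B u_t
    (hdyn : ∀ t, x (t + 1) = A (x t) + B (u t))
    (huout : ∀ t, u t = uhat t 0)
    -- (2): v_t = Π_U (v_{t−1} − γu ∇fu_{t−1}(v_{t−1}))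
    (hv : ∀ t, 1 ≤ t → v t ∈ U ∧ ∀ w ∈ U,
        ‖v t - (v (t - 1) - γu • gradient (fu (t - 1)) (v (t - 1)))‖ ≤
          ‖w - (v (t - 1) - γu • gradient (fu (t - 1)) (v (t - 1)))‖)
    -- (3): vhat_t = (uhat_{t−1}^{(2)}, …, uhat_{t−1}^{(μ)}, v_t)  (0-indexed components)
    (hvhat : ∀ t, 1 ≤ t →
        (∀ i, i + 1 < μ → vhat t i = uhat (t - 1) (i + 1)) ∧ vhat t (μ - 1) = v t)
    -- (4): x̂_{t+μ} = A^μ x_t + S_c vhat_t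
    (hxhat : ∀ t, 1 ≤ t → xhat (t + μ) = stateSeq (⇑A) (⇑B) (x t) (vhat t) μ)
    -- (5): xπ_{t+μ} = Π_X̄ (x̂_{t+μ} − γx ∇fx_{t−1}(x̂_{t+μ}))
    (hxpi : ∀ t, 1 ≤ t → xpi (t + μ) ∈ Xbar ∧ ∀ z ∈ Xbar,
        ‖xpi (t + μ) - (xhat (t + μ) - γx • gradient (fx (t - 1)) (xhat (t + μ)))‖ ≤
          ‖z - (xhat (t + μ) - γx • gradient (fx (t - 1)) (xhat (t + μ)))‖)
    -- (6)-(8): α_t and the auxiliary feasible sequence g_t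
    (hcase0 : ∀ t, 1 ≤ t → xhat (t + μ) = xpi (t + μ) → α t = 0 ∧ g t = vhat t)
    (hcase1 : ∀ t, 1 ≤ t → xhat (t + μ) ≠ xpi (t + μ) →
        α t = 1 / (1 + δ / ‖xhat (t + μ) - xpi (t + μ)‖) ∧
        Feasible (⇑A) (⇑B) X U μ (x t) (g t) ∧
        stateSeq (⇑A) (⇑B) (x t) (g t) μ =
          xpi (t + μ) + (δ / ‖xhat (t + μ) - xpi (t + μ)‖) • (xpi (t + μ) - xhat (t + μ)))
    -- (9): uhat_t = (1 − α_t) vhat_t + α_t g_t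
    (huhat : ∀ t, 1 ≤ t → ∀ i, uhat t i = (1 - α t) • vhat t i + α t • g t i)
    :
    ∀ t : ℕ, μ ≤ t →
      ‖xhat (t + μ) - x (t + μ)‖ ≤
        ‖ScMap A B μ‖ *
          ((∑ i ∈ Finset.range μ, ‖v (t - i) - η (t - 1 - i)‖) +
            (μ : ℝ) * Du * ∑ k ∈ Finset.Icc (t + 1 - μ) (t + μ - 1), α k) := by
  intro t ht
  have ht1 : 1 ≤ t := le_trans hμ ht
  have h0U : (0 : EuclideanSpace ℝ (Fin m)) ∈ U := interior_subset hU0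
  have hDu0 : (0:ℝ) ≤ Du := le_trans (norm_nonneg _) (hDu 0 h0U 0 h0U)
  have hUconv : ∀ a ∈ U, ∀ b ∈ U, ∀ c : ℝ, 0 ≤ c → c ≤ 1 → (1 - c) • a + c • b ∈ U := by
    intro a ha b hb c hc0 hc1
    rw [hU] at ha hb ⊢
    intro i
    have h1 := ha i
    have h2 := hb i
    rw [inner_add_right, real_inner_smul_right, real_inner_smul_right]
    nlinarith [h1, h2]
  have hα01 : ∀ s, 1 ≤ s → 0 ≤ α s ∧ α s ≤ 1 := by
    intro s hs
    by_cases h : xhat (s + μ) = xpi (s + μ)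
    · rw [(hcase0 s hs h).1]; norm_num
    · have hd : (0:ℝ) < ‖xhat (s + μ) - xpi (s + μ)‖ :=
        norm_pos_iff.mpr (sub_ne_zero.mpr h)
      have hq : (0:ℝ) < δ / ‖xhat (s + μ) - xpi (s + μ)‖ := div_pos hδ hd
      rw [(hcase1 s hs h).1]
      constructor
      · positivity
      · rw [div_le_one (by linarith)]; linarith
  have hgU : ∀ s, 1 ≤ s → (∀ i < μ, vhat s i ∈ U) → ∀ i < μ, g s i ∈ U := by
    intro s hs hvU i hi
    by_cases h : xhat (s + μ) = xpi (s + μ)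
    · rw [(hcase0 s hs h).2]; exact hvU i hi
    · exact (hcase1 s hs h).2.1.1 i hi
  have huU : ∀ s, ∀ i < μ, uhat s i ∈ U := by
    intro s
    induction s with
    | zero => exact hu0feas.1
    | succ s ih =>
      have hs1 : 1 ≤ s + 1 := Nat.le_add_left 1 s
      have hvU : ∀ i < μ, vhat (s+1) i ∈ U := by
        intro i hi
        rcases Nat.lt_or_ge (i+1) μ with h | h
        · have heq := (hvhat (s+1) hs1).1 i h
          rw [Nat.add_sub_cancel] at heq
          rw [heq]; exact ih (i+1) h
        · have hieq : i = μ - 1 := by omega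
          rw [hieq, (hvhat (s+1) hs1).2]
          exact (hv (s+1) hs1).1
      intro i hi
      rw [huhat (s+1) hs1 i]
      have hα := hα01 (s+1) hs1
      exact hUconv _ (hvU i hi) _ (hgU (s+1) hs1 hvU i hi) _ hα.1 hα.2
  have hvhatU : ∀ s, 1 ≤ s → ∀ i < μ, vhat s i ∈ U := by
    intro s hs i hi
    rcases Nat.lt_or_ge (i+1) μ with h | h
    · rw [(hvhat s hs).1 i h]; exact huU (s-1) (i+1) h
    · have hieq : i = μ - 1 := by omega
      rw [hieq, (hvhat s hs).2]; exact (hv s hs).1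
  have hstep : ∀ s, 1 ≤ s → ∀ i < μ, ‖uhat s i - vhat s i‖ ≤ α s * Du := by
    intro s hs i hi
    rw [huhat s hs i]
    have heq : (1 - α s) • vhat s i + α s • g s i - vhat s i = α s • (g s i - vhat s i) := by
      module
    rw [heq, norm_smul, Real.norm_eq_abs, abs_of_nonneg (hα01 s hs).1]
    exact mul_le_mul_of_nonneg_left
      (hDu _ (hgU s hs (hvhatU s hs) i hi) _ (hvhatU s hs i hi)) (hα01 s hs).1
  have hchain : ∀ j, ∀ s, 1 ≤ s → ∀ i, i + j < μ →
      ‖uhat (s + j) i - vhat s (i + j)‖ ≤ Du * ∑ r ∈ Finset.Icc s (s + j), α r := by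
    intro j
    induction j with
    | zero =>
      intro s hs i hi
      simp only [Nat.add_zero, Finset.Icc_self, Finset.sum_singleton]
      rw [mul_comm]
      exact hstep s hs i (by omega)
    | succ j ih =>
      intro s hs i hi
      have hs1 : 1 ≤ s + (j + 1) := by omega
      have h1 : vhat (s + (j + 1)) i = uhat (s + j) (i + 1) :=
        (hvhat (s + (j+1)) hs1).1 i (by omega)
      have h2 := hstep (s + (j+1)) hs1 i (by omega)
      have h3 := ih s hs (i + 1) (by omega)
      have h4 : i + 1 + j = i + (j + 1) := by omega
      rw [h4] at h3
      rw [← h1] at h3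
      calc ‖uhat (s + (j+1)) i - vhat s (i + (j+1))‖
          ≤ ‖uhat (s + (j+1)) i - vhat (s + (j+1)) i‖
            + ‖vhat (s + (j+1)) i - vhat s (i + (j+1))‖ :=
            norm_sub_le_norm_sub_add_norm_sub _ _ _
        _ ≤ α (s + (j+1)) * Du + Du * ∑ r ∈ Finset.Icc s (s + j), α r := add_le_add h2 h3
        _ = Du * ∑ r ∈ Finset.Icc s (s + (j+1)), α r := by
            rw [show s + (j+1) = (s + j) + 1 from rfl,
              Finset.sum_Icc_succ_top (by omega : s ≤ s + j + 1)]
            ring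
  have hcomp : ∀ j < μ, ‖vhat t j - u (t + j)‖ ≤
      Du * ∑ k ∈ Finset.Icc (t + 1 - μ) (t + μ - 1), α k := by
    intro j hj
    have h := hchain j t ht1 0 (by omega)
    rw [Nat.zero_add] at h
    have h' : ‖vhat t j - u (t + j)‖ ≤ Du * ∑ r ∈ Finset.Icc t (t + j), α r := by
      rw [norm_sub_rev, huout (t + j)]; exact h
    refine le_trans h' (mul_le_mul_of_nonneg_left ?_ hDu0)
    apply Finset.sum_le_sum_of_subset_of_nonneg
    · exact Finset.Icc_subset_Icc (by omega) (by omega)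
    · intro k hk _
      rw [Finset.mem_Icc] at hk
      exact (hα01 k (by omega)).1
  set w : PiLp 2 (fun _ : Fin μ => EuclideanSpace ℝ (Fin m)) :=
    WithLp.toLp 2 (fun i => vhat t (i : ℕ) - u (t + (i : ℕ))) with hwdef
  have hxclosed : ∀ k, x (t + k) = stateSeq (⇑A) (⇑B) (x t) (fun k => u (t + k)) k := by
    intro k
    induction k with
    | zero => rfl
    | succ k ih =>
      rw [show t + (k + 1) = (t + k) + 1 from rfl, hdyn (t + k),
        show stateSeq (⇑A) (⇑B) (x t) (fun k => u (t + k)) (k+1)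
          = A (stateSeq (⇑A) (⇑B) (x t) (fun k => u (t + k)) k) + B (u (t + k)) from rfl, ih]
  have hw : xhat (t + μ) - x (t + μ) = ScMap A B μ w := by
    have hsc : ScMap A B μ w = ∑ j ∈ Finset.range μ,
        ((A ^ (μ - 1 - j)) (B (vhat t j)) - (A ^ (μ - 1 - j)) (B (u (t + j)))) := by
      have h0 : ScMap A B μ w
          = ∑ i : Fin μ, (A ^ (μ - 1 - (i : ℕ))) (B (w i)) := rfl
      rw [h0]
      rw [Fin.sum_univ_eq_sum_range
        (fun j => (A ^ (μ - 1 - j)) (B (vhat t j - u (t + j))))]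
      exact Finset.sum_congr rfl (fun j _ => by rw [map_sub, map_sub])
    rw [hxhat t ht1, hxclosed μ, stateSeq_formula, stateSeq_formula, hsc,
      Finset.sum_sub_distrib]
    abel
  calc ‖xhat (t + μ) - x (t + μ)‖ = ‖ScMap A B μ w‖ := by rw [hw]
    _ ≤ ‖ScMap A B μ‖ * ‖w‖ := (ScMap A B μ).le_opNorm w
    _ ≤ ‖ScMap A B μ‖ * ∑ i : Fin μ, ‖w i‖ :=
        mul_le_mul_of_nonneg_left (pilp_norm_le_sum w) (norm_nonneg _)
    _ ≤ ‖ScMap A B μ‖ *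
        ((μ : ℝ) * Du * ∑ k ∈ Finset.Icc (t + 1 - μ) (t + μ - 1), α k) := by
        refine mul_le_mul_of_nonneg_left ?_ (norm_nonneg _)
        calc ∑ i : Fin μ, ‖w i‖
            ≤ ∑ _i : Fin μ, Du * ∑ k ∈ Finset.Icc (t + 1 - μ) (t + μ - 1), α k :=
              Finset.sum_le_sum (fun i _ => hcomp (i : ℕ) i.isLt)
          _ = (μ : ℝ) * Du * ∑ k ∈ Finset.Icc (t + 1 - μ) (t + μ - 1), α k := by
              rw [Finset.sum_const, Finset.card_univ, Fintype.card_fin, nsmul_eq_mul]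
              ring
    _ ≤ ‖ScMap A B μ‖ *
        ((∑ i ∈ Finset.range μ, ‖v (t - i) - η (t - 1 - i)‖) +
          (μ : ℝ) * Du * ∑ k ∈ Finset.Icc (t + 1 - μ) (t + μ - 1), α k) := by
        refine mul_le_mul_of_nonneg_left ?_ (norm_nonneg _)
        have hnn : (0:ℝ) ≤ ∑ i ∈ Finset.range μ, ‖v (t - i) - η (t - 1 - i)‖ :=
          Finset.sum_nonneg (fun i _ => norm_nonneg _)
        linarith
end

section
/- Let μ ≥ 1, V a real vector space, and let α_t ∈ ℝ, v_t ∈ V, g_t ∈ V^μ (for t ≥ 1) and û_t ∈ V^μ (for t ≥ 0) satisfy, for all t ≥ 1: û_t^{(i)} = (1−α_t) û_{t−1}^{(i+1)} + α_t g_t^{(i)} for 1 ≤ i ≤ μ−1, and û_t^{(μ)} = (1−α_t) v_t + α_t g_t^{(μ)}. Then for all t ≥ 1 and all integers s with 0 ≤ s ≤ min(μ−1, t−1): û_t^{(μ−s)} = (∏_{k=t−s}^{t} (1−α_k)) v_{t−s} + Σ_{j=0}^{s} (∏_{k=t+1−j}^{t} (1−α_k)) α_{t−j} g_{t−j}^{(μ−s+j)},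 where products over empty index ranges equal 1. -/
/-- **Closed form of the recursively updated predicted input sequence.**
If `uhat_t^{(i)} = (1−α_t) uhat_{t−1}^{(i+1)} + α_t g_t^{(i)}` for `1 ≤ i ≤ μ−1` and
`uhat_t^{(μ)} = (1−α_t) v_t + α_t g_t^{(μ)}` (for `t ≥ 1`), then for all `t ≥ 1` and
`0 ≤ s ≤ min(μ−1, t−1)`:
`uhat_t^{(μ−s)} = (∏_{k=t−s}^{t} (1−α_k)) v_{t−s}
  + Σ_{j=0}^{s} (∏_{k=t+1−j}^{t} (1−α_k)) α_{t−j} g_{t−j}^{(μ−s+j)}`,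
with empty products equal to `1`. -/
theorem predicted_input_closed_form {V : Type*} [AddCommGroup V] [Module ℝ V]
    (μ : ℕ) (hμ : 1 ≤ μ) (α : ℕ → ℝ) (v : ℕ → V) (g : ℕ → ℕ → V) (uhat : ℕ → ℕ → V)
    (hrec : ∀ t, 1 ≤ t → ∀ i, 1 ≤ i → i ≤ μ - 1 →
        uhat t i = (1 - α t) • uhat (t - 1) (i + 1) + α t • g t i)
    (hlast : ∀ t, 1 ≤ t → uhat t μ = (1 - α t) • v t + α t • g t μ) :
    ∀ t, 1 ≤ t → ∀ s, s ≤ min (μ - 1) (t - 1) →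
      uhat t (μ - s) =
        (∏ k ∈ Finset.Icc (t - s) t, (1 - α k)) • v (t - s) +
          ∑ j ∈ Finset.range (s + 1),
            ((∏ k ∈ Finset.Icc (t + 1 - j) t, (1 - α k)) * α (t - j)) • g (t - j) (μ - s + j)  := by
  intro t ht s hs
  induction s generalizing t with
  | zero =>
    simp only [Nat.sub_zero]
    rw [hlast t ht, Finset.sum_range_one]
    simp only [Nat.sub_zero, Nat.add_zero]
    rw [Finset.Icc_self, Finset.prod_singleton,
      Finset.Icc_eq_empty (by omega : ¬ t + 1 ≤ t), Finset.prod_empty, one_mul]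
  | succ s ih =>
    have hs1 : s + 1 ≤ μ - 1 := le_trans hs (min_le_left _ _)
    have hs2 : s + 1 ≤ t - 1 := le_trans hs (min_le_right _ _)
    obtain ⟨t', rfl⟩ : ∃ t', t = t' + 1 := ⟨t - 1, by omega⟩
    simp only [Nat.add_sub_cancel] at hs2
    have ht1 : 1 ≤ t' := by omega
    have hrec' := hrec (t' + 1) ht (μ - (s + 1)) (by omega) (by omega)
    have ih' := ih t' ht1 (by omega)
    simp only [Nat.add_sub_cancel] at hrec'
    have hidx : μ - (s + 1) + 1 = μ - s := by omega
    rw [hrec', hidx, Finset.sum_range_succ' _ (s + 1), ih']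
    rw [Finset.Icc_eq_empty (by omega : ¬ t' + 1 + 1 - 0 ≤ t' + 1), Finset.prod_empty, one_mul]
    rw [smul_add, Finset.smul_sum]
    have h1 : (1 - α (t' + 1)) • (∏ k ∈ Finset.Icc (t' - s) t', (1 - α k)) • v (t' - s)
        = (∏ k ∈ Finset.Icc (t' + 1 - (s + 1)) (t' + 1), (1 - α k)) • v (t' + 1 - (s + 1)) := by
      have e : t' + 1 - (s + 1) = t' - s := by omega
      rw [e, smul_smul, Finset.prod_Icc_succ_top (by omega), mul_comm]
    rw [h1, Nat.sub_zero, Nat.add_zero, add_assoc]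
    congr 2
    apply Finset.sum_congr rfl
    intro j hj
    simp only [Finset.mem_range] at hj
    have h2 : t' + 1 + 1 - (j + 1) = t' + 1 - j := by omega
    have h3 : t' + 1 - (j + 1) = t' - j := by omega
    have h4 : μ - (s + 1) + (j + 1) = μ - s + j := by omega
    rw [h2, h3, h4, smul_smul]
    congr 1
    rw [Finset.prod_Icc_succ_top (by omega : t' + 1 - j ≤ t' + 1)]
    ring
end

section
/- Let E be a real normed vector space, κ ∈ [0,1), and v, η : ℕ → E sequences with ‖v_{t+1} − η_t‖ ≤ κ ‖v_t − η_t‖ for all t ≥ 0. Then for every T ∈ ℕ: Σ_{t=0}^{T} ‖v_{t+1} − η_t‖ ≤ (κ/(1−κ)) ( ‖η_0 − v_0‖ + Σ_{t=1}^{T} ‖η_t − η_{t−1}‖ ). -/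
/-- **Cumulative tracking error of a contracting sequence is bounded by the path length.**
If `‖v_{t+1} − η_t‖ ≤ κ ‖v_t − η_t‖` for all `t` and `κ ∈ [0,1)`, then for every `T`:
`Σ_{t=0}^{T} ‖v_{t+1} − η_t‖ ≤ (κ/(1−κ)) (‖η_0 − v_0‖ + Σ_{t=1}^{T} ‖η_t − η_{t−1}‖)`. -/
theorem cumulative_tracking_error_le_path_length {E : Type*}
    [NormedAddCommGroup E] [NormedSpace ℝ E]
    (κ : ℝ) (hκ0 : 0 ≤ κ) (hκ1 : κ < 1) (v η : ℕ → E)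
    (hcontr : ∀ t : ℕ, ‖v (t + 1) - η t‖ ≤ κ * ‖v t - η t‖) (T : ℕ) :
    ∑ t ∈ Finset.range (T + 1), ‖v (t + 1) - η t‖ ≤
      κ / (1 - κ) * (‖η 0 - v 0‖ + ∑ t ∈ Finset.Icc 1 T, ‖η t - η (t - 1)‖) := by
  have hκ' : (0:ℝ) < 1 - κ := by linarith
  set e : ℕ → ℝ := fun t => ‖v (t + 1) - η t‖ with he
  set S := ∑ t ∈ Finset.range (T + 1), e t with hS
  set D := ‖η 0 - v 0‖ + ∑ t ∈ Finset.Icc 1 T, ‖η t - η (t - 1)‖ with hD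
  have henn : ∀ t, 0 ≤ e t := fun t => norm_nonneg _
  have hIcc : ∑ t ∈ Finset.Icc 1 T, ‖η t - η (t - 1)‖
      = ∑ i ∈ Finset.range T, ‖η (i + 1) - η i‖ := by
    rw [← Finset.Ico_add_one_right_eq_Icc, Finset.sum_Ico_eq_sum_range]
    simp [add_comm]
  have hsplit : S = e 0 + ∑ i ∈ Finset.range T, e (i + 1) := by
    rw [hS, Finset.sum_range_succ']
    ring
  have h0 : e 0 ≤ κ * ‖η 0 - v 0‖ := by
    have := hcontr 0
    simpa [norm_sub_rev (v 0)] using this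
  have hstep : ∀ i, e (i + 1) ≤ κ * (‖η (i + 1) - η i‖ + e i) := by
    intro i
    have h1 : ‖v (i + 1) - η (i + 1)‖ ≤ ‖η (i + 1) - η i‖ + e i := by
      have : v (i + 1) - η (i + 1) = -(η (i + 1) - η i) + (v (i + 1) - η i) := by abel
      rw [this]
      exact le_trans (norm_add_le _ _) (by rw [norm_neg])
    calc e (i + 1) ≤ κ * ‖v (i + 1) - η (i + 1)‖ := hcontr (i + 1)
      _ ≤ κ * (‖η (i + 1) - η i‖ + e i) := by
          exact mul_le_mul_of_nonneg_left h1 hκ0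
  have hsum : ∑ i ∈ Finset.range T, e (i + 1)
      ≤ κ * (∑ i ∈ Finset.range T, ‖η (i + 1) - η i‖) + κ * ∑ i ∈ Finset.range T, e i := by
    calc ∑ i ∈ Finset.range T, e (i + 1)
        ≤ ∑ i ∈ Finset.range T, κ * (‖η (i + 1) - η i‖ + e i) :=
          Finset.sum_le_sum fun i _ => hstep i
      _ = κ * (∑ i ∈ Finset.range T, ‖η (i + 1) - η i‖) + κ * ∑ i ∈ Finset.range T, e i := by
          rw [Finset.mul_sum, Finset.mul_sum, ← Finset.sum_add_distrib]
          exact Finset.sum_congr rfl fun i _ => by ring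
  have hSle : ∑ i ∈ Finset.range T, e i ≤ S := by
    rw [hS, Finset.sum_range_succ]
    exact le_add_of_nonneg_right (henn T)
  have key : S ≤ κ * D + κ * S := by
    have := hsum
    nlinarith [hsplit, h0, hIcc, hSle]
  rw [div_mul_eq_mul_div, le_div_iff₀ hκ']
  nlinarith [key]
end

section
/- Let A : ℝ^n → ℝ^n and B : ℝ^m → ℝ^n be linear maps with operator norms ‖A‖, ‖B‖, let κ ∈ [0,1) with ‖A‖κ < 1, and let x̂, xπ, θ : ℕ → ℝ^n and w, η : ℕ → ℝ^m be sequences such that for all t ≥ 0: x̂_{t+1} = A xπ_t + B w_t; θ_t = A θ_t + B η_t; and ‖xπ_t − θ_{t−1}‖ ≤ κ ‖x̂_t − θ_{t−1}‖, where by convention θ_{−1} = x̂_0. Then for every T ∈ ℕ: Σ_{t=0}^{T} ‖x̂_t − θ_{t−1}‖ ≤ (‖A‖/(1−‖A‖κ)) Σ_{t=0}^{T} ‖θ_t − θ_{t−1}‖ + (‖B‖/(1−‖A‖κ)) Σ_{t=0}^{T} ‖w_t − η_t‖. -/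
lemma aux_sum_bound (c a b : ℝ) (hc1 : c < 1) (hc0 : 0 ≤ c) (ha : 0 ≤ a) (hb : 0 ≤ b)
    (E D U : ℕ → ℝ) (hEnn : ∀ t, 0 ≤ E t) (hDnn : ∀ t, 0 ≤ D t) (hUnn : ∀ t, 0 ≤ U t)
    (hE0 : E 0 = 0)
    (key : ∀ t, E (t + 1) ≤ c * E t + a * D t + b * U t) (T : ℕ) :
    ∑ t ∈ Finset.range (T + 1), E t ≤
      a / (1 - c) * ∑ t ∈ Finset.range (T + 1), D t +
        b / (1 - c) * ∑ t ∈ Finset.range (T + 1), U t := by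
  have hpos : 0 < 1 - c := by linarith
  set S := ∑ t ∈ Finset.range (T + 1), E t with hS
  set SD := ∑ t ∈ Finset.range (T + 1), D t with hSD
  set SU := ∑ t ∈ Finset.range (T + 1), U t with hSU
  have hS1 : S = ∑ t ∈ Finset.range T, E (t + 1) := by
    rw [hS, Finset.sum_range_succ', hE0, add_zero]
  have hsub : Finset.range T ⊆ Finset.range (T + 1) := Finset.range_subset_range.2 (Nat.le_succ T)
  have hEle : ∑ t ∈ Finset.range T, E t ≤ S :=
    Finset.sum_le_sum_of_subset_of_nonneg hsub (fun i _ _ => hEnn i)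
  have hDle : ∑ t ∈ Finset.range T, D t ≤ SD :=
    Finset.sum_le_sum_of_subset_of_nonneg hsub (fun i _ _ => hDnn i)
  have hUle : ∑ t ∈ Finset.range T, U t ≤ SU :=
    Finset.sum_le_sum_of_subset_of_nonneg hsub (fun i _ _ => hUnn i)
  have hmain : S ≤ c * S + a * SD + b * SU := by
    calc S = ∑ t ∈ Finset.range T, E (t + 1) := hS1
      _ ≤ ∑ t ∈ Finset.range T, (c * E t + a * D t + b * U t) :=
          Finset.sum_le_sum (fun i _ => key i)
      _ = c * ∑ t ∈ Finset.range T, E t + a * ∑ t ∈ Finset.range T, D t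
            + b * ∑ t ∈ Finset.range T, U t := by
          rw [Finset.sum_add_distrib, Finset.sum_add_distrib, Finset.mul_sum,
            Finset.mul_sum, Finset.mul_sum]
      _ ≤ c * S + a * SD + b * SU := by
          have h1 := mul_le_mul_of_nonneg_left hEle hc0
          have h2 := mul_le_mul_of_nonneg_left hDle ha
          have h3 := mul_le_mul_of_nonneg_left hUle hb
          linarith
  rw [div_mul_eq_mul_div, div_mul_eq_mul_div, ← add_div, le_div_iff₀ hpos]
  nlinarith

/-- **Cumulative distance of predicted states to the time-varying steady states.**
With `xhat_{t+1} = A xπ_t + B w_t`, steady states `θ_t = A θ_t + B η_t`, contraction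
`‖xπ_t − θ_{t−1}‖ ≤ κ ‖xhat_t − θ_{t−1}‖` (convention `θ_{−1} = xhat_0`) and `‖A‖κ < 1`:
`Σ_{t=0}^{T} ‖xhat_t − θ_{t−1}‖ ≤ (‖A‖/(1−‖A‖κ)) Σ_{t=0}^{T} ‖θ_t − θ_{t−1}‖
  + (‖B‖/(1−‖A‖κ)) Σ_{t=0}^{T} ‖w_t − η_t‖`. -/
theorem cumulative_predicted_state_error {n m : ℕ}
    (A : EuclideanSpace ℝ (Fin n) →L[ℝ] EuclideanSpace ℝ (Fin n))
    (B : EuclideanSpace ℝ (Fin m) →L[ℝ] EuclideanSpace ℝ (Fin n))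
    (κ : ℝ) (hκ0 : 0 ≤ κ) (hκ1 : κ < 1) (hAκ : ‖A‖ * κ < 1)
    (xhat xpi θ : ℕ → EuclideanSpace ℝ (Fin n))
    (w η : ℕ → EuclideanSpace ℝ (Fin m))
    (hdyn : ∀ t : ℕ, xhat (t + 1) = A (xpi t) + B (w t))
    (hθ : ∀ t : ℕ, θ t = A (θ t) + B (η t))
    (hcontr : ∀ t : ℕ, ‖xpi t - (if t = 0 then xhat 0 else θ (t - 1))‖ ≤
        κ * ‖xhat t - (if t = 0 then xhat 0 else θ (t - 1))‖)
    (T : ℕ) :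
    ∑ t ∈ Finset.range (T + 1), ‖xhat t - (if t = 0 then xhat 0 else θ (t - 1))‖ ≤
      ‖A‖ / (1 - ‖A‖ * κ) *
          ∑ t ∈ Finset.range (T + 1), ‖θ t - (if t = 0 then xhat 0 else θ (t - 1))‖ +
        ‖B‖ / (1 - ‖A‖ * κ) * ∑ t ∈ Finset.range (T + 1), ‖w t - η t‖ := by
  have hA0 : 0 ≤ ‖A‖ := norm_nonneg _
  have key : ∀ t : ℕ,
      ‖xhat (t + 1) - (if t + 1 = 0 then xhat 0 else θ (t + 1 - 1))‖ ≤
        ‖A‖ * κ * ‖xhat t - (if t = 0 then xhat 0 else θ (t - 1))‖ +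
          ‖A‖ * ‖θ t - (if t = 0 then xhat 0 else θ (t - 1))‖ + ‖B‖ * ‖w t - η t‖ := by
    intro t
    have ht1 : (if t + 1 = 0 then xhat 0 else θ (t + 1 - 1)) = θ t := by simp
    rw [ht1]
    have h1 : xhat (t + 1) - θ t = A (xpi t - θ t) + B (w t - η t) := by
      rw [hdyn t, map_sub, map_sub]
      conv_lhs => rw [hθ t]
      abel
    set ct := (if t = 0 then xhat 0 else θ (t - 1)) with hct
    have h3 : ‖xpi t - θ t‖ ≤ κ * ‖xhat t - ct‖ + ‖θ t - ct‖ := by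
      calc ‖xpi t - θ t‖ ≤ ‖xpi t - ct‖ + ‖ct - θ t‖ := norm_sub_le_norm_sub_add_norm_sub _ _ _
        _ ≤ κ * ‖xhat t - ct‖ + ‖θ t - ct‖ := by
            rw [norm_sub_rev ct]
            exact add_le_add_left (hcontr t) _
    calc ‖xhat (t + 1) - θ t‖ = ‖A (xpi t - θ t) + B (w t - η t)‖ := by rw [h1]
      _ ≤ ‖A (xpi t - θ t)‖ + ‖B (w t - η t)‖ := norm_add_le _ _
      _ ≤ ‖A‖ * ‖xpi t - θ t‖ + ‖B‖ * ‖w t - η t‖ :=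
          add_le_add (A.le_opNorm _) (B.le_opNorm _)
      _ ≤ ‖A‖ * κ * ‖xhat t - ct‖ + ‖A‖ * ‖θ t - ct‖ + ‖B‖ * ‖w t - η t‖ := by
          nlinarith [norm_nonneg (w t - η t), norm_nonneg (B : _ →L[ℝ] _)]
  exact aux_sum_bound (‖A‖ * κ) ‖A‖ ‖B‖ hAκ (mul_nonneg hA0 hκ0) hA0 (norm_nonneg _)
    (fun t => ‖xhat t - (if t = 0 then xhat 0 else θ (t - 1))‖)
    (fun t => ‖θ t - (if t = 0 then xhat 0 else θ (t - 1))‖)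
    (fun t => ‖w t - η t‖)
    (fun t => norm_nonneg _) (fun t => norm_nonneg _) (fun t => norm_nonneg _)
    (by simp) key T
end

section
/- Let A : ℝ^n → ℝ^n and B : ℝ^m → ℝ^n be linear maps with ‖A‖κ < 1 for some κ ∈ [0,1), and let x̂, xπ, θ : ℕ → ℝ^n and w, η : ℕ → ℝ^m satisfy, for all t ≥ 0: x̂_{t+1} = A xπ_t + B w_t; θ_t = A θ_t + B η_t; ‖xπ_t − θ_{t−1}‖ ≤ κ ‖x̂_t − θ_{t−1}‖, with the convention θ_{−1} = x̂_0. Then for every T ∈ ℕ: Σ_{t=0}^{T} ‖x̂_t − xπ_t‖ ≤ ((1+κ)‖A‖/(1−‖A‖κ)) Σ_{t=0}^{T} ‖θ_t − θ_{t−1}‖ + ((1+κ)‖B‖/(1−‖A‖κ)) Σ_{t=0}^{T} ‖w_t − η_t‖. -/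
/-- **Cumulative gradient-step correction of the predicted states.**
With `xhat_{t+1} = A xπ_t + B w_t`, steady states `θ_t = A θ_t + B η_t`, contraction
`‖xπ_t − θ_{t−1}‖ ≤ κ ‖xhat_t − θ_{t−1}‖` (convention `θ_{−1} = xhat_0`) and `‖A‖κ < 1`:
`Σ_{t=0}^{T} ‖xhat_t − xπ_t‖ ≤ ((1+κ)‖A‖/(1−‖A‖κ)) Σ_{t=0}^{T} ‖θ_t − θ_{t−1}‖
  + ((1+κ)‖B‖/(1−‖A‖κ)) Σ_{t=0}^{T} ‖w_t − η_t‖`. -/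
theorem cumulative_gradient_step_correction {n m : ℕ}
    (A : EuclideanSpace ℝ (Fin n) →L[ℝ] EuclideanSpace ℝ (Fin n))
    (B : EuclideanSpace ℝ (Fin m) →L[ℝ] EuclideanSpace ℝ (Fin n))
    (κ : ℝ) (hκ0 : 0 ≤ κ) (hκ1 : κ < 1) (hAκ : ‖A‖ * κ < 1)
    (xhat xpi θ : ℕ → EuclideanSpace ℝ (Fin n))
    (w η : ℕ → EuclideanSpace ℝ (Fin m))
    (hdyn : ∀ t : ℕ, xhat (t + 1) = A (xpi t) + B (w t))
    (hθ : ∀ t : ℕ, θ t = A (θ t) + B (η t))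
    (hcontr : ∀ t : ℕ, ‖xpi t - (if t = 0 then xhat 0 else θ (t - 1))‖ ≤
        κ * ‖xhat t - (if t = 0 then xhat 0 else θ (t - 1))‖)
    (T : ℕ) :
    ∑ t ∈ Finset.range (T + 1), ‖xhat t - xpi t‖ ≤
      (1 + κ) * ‖A‖ / (1 - ‖A‖ * κ) *
          ∑ t ∈ Finset.range (T + 1), ‖θ t - (if t = 0 then xhat 0 else θ (t - 1))‖ +
        (1 + κ) * ‖B‖ / (1 - ‖A‖ * κ) * ∑ t ∈ Finset.range (T + 1), ‖w t - η t‖ := by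
  have hA0 : (0:ℝ) ≤ ‖A‖ := norm_nonneg _
  have hB0 : (0:ℝ) ≤ ‖B‖ := norm_nonneg _
  have hαpos : (0:ℝ) < 1 - ‖A‖ * κ := by linarith
  set e : ℕ → ℝ := fun t => ‖xhat t - (if t = 0 then xhat 0 else θ (t - 1))‖ with hedef
  set d : ℕ → ℝ := fun t => ‖θ t - (if t = 0 then xhat 0 else θ (t - 1))‖ with hddef
  set v : ℕ → ℝ := fun t => ‖w t - η t‖ with hvdef
  have he0 : e 0 = 0 := by simp [hedef]
  have hrec : ∀ t, e (t + 1) ≤ ‖A‖ * κ * e t + (‖A‖ * d t + ‖B‖ * v t) := by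
    intro t
    have h1 : xhat (t + 1) - θ t = A (xpi t - θ t) + B (w t - η t) := by
      rw [hdyn t, map_sub, map_sub]
      nth_rewrite 1 [hθ t]
      abel
    have hstep : ‖xpi t - θ t‖ ≤ κ * e t + d t := by
      have htri : ‖xpi t - θ t‖ ≤
          ‖xpi t - (if t = 0 then xhat 0 else θ (t - 1))‖ +
            ‖θ t - (if t = 0 then xhat 0 else θ (t - 1))‖ := by
        have : xpi t - θ t = (xpi t - (if t = 0 then xhat 0 else θ (t - 1)))
            - (θ t - (if t = 0 then xhat 0 else θ (t - 1))) := by abel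
        rw [this]
        exact norm_sub_le _ _
      have := hcontr t
      simp only [hedef, hddef]
      linarith
    have he1 : e (t + 1) = ‖xhat (t + 1) - θ t‖ := by
      simp [hedef]
    calc e (t + 1) = ‖A (xpi t - θ t) + B (w t - η t)‖ := by rw [he1, h1]
      _ ≤ ‖A (xpi t - θ t)‖ + ‖B (w t - η t)‖ := norm_add_le _ _
      _ ≤ ‖A‖ * ‖xpi t - θ t‖ + ‖B‖ * ‖w t - η t‖ := by
          gcongr <;> [exact A.le_opNorm _; exact B.le_opNorm _]
      _ ≤ ‖A‖ * (κ * e t + d t) + ‖B‖ * v t := by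
          have := mul_le_mul_of_nonneg_left hstep hA0
          simp only [hvdef]; linarith
      _ = ‖A‖ * κ * e t + (‖A‖ * d t + ‖B‖ * v t) := by ring
  have hsum : (1 - ‖A‖ * κ) * (∑ t ∈ Finset.range (T + 1), e t) ≤
      ∑ t ∈ Finset.range (T + 1), (‖A‖ * d t + ‖B‖ * v t) := by
    have h1 : ∑ t ∈ Finset.range (T + 1), e t
        = (∑ t ∈ Finset.range T, e (t + 1)) + e 0 := Finset.sum_range_succ' e T
    have h2 : ∑ t ∈ Finset.range T, e (t + 1) ≤
        ∑ t ∈ Finset.range T, (‖A‖ * κ * e t + (‖A‖ * d t + ‖B‖ * v t)) :=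
      Finset.sum_le_sum fun t _ => hrec t
    have h3 : ∑ t ∈ Finset.range T, (‖A‖ * κ * e t + (‖A‖ * d t + ‖B‖ * v t))
        = ‖A‖ * κ * ∑ t ∈ Finset.range T, e t
          + ∑ t ∈ Finset.range T, (‖A‖ * d t + ‖B‖ * v t) := by
      rw [Finset.sum_add_distrib, Finset.mul_sum]
    have h4 : ∑ t ∈ Finset.range T, e t ≤ ∑ t ∈ Finset.range (T + 1), e t :=
      Finset.sum_le_sum_of_subset_of_nonneg (Finset.range_subset_range.2 (Nat.le_succ T))
        (fun i _ _ => norm_nonneg _)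
    have h5 : ∑ t ∈ Finset.range T, (‖A‖ * d t + ‖B‖ * v t) ≤
        ∑ t ∈ Finset.range (T + 1), (‖A‖ * d t + ‖B‖ * v t) :=
      Finset.sum_le_sum_of_subset_of_nonneg (Finset.range_subset_range.2 (Nat.le_succ T))
        (fun i _ _ => by positivity)
    have hκA : (0:ℝ) ≤ ‖A‖ * κ := mul_nonneg hA0 hκ0
    have h6 := mul_le_mul_of_nonneg_left h4 hκA
    nlinarith
  have hmain : ∑ t ∈ Finset.range (T + 1), ‖xhat t - xpi t‖ ≤
      (1 + κ) * ∑ t ∈ Finset.range (T + 1), e t := by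
    rw [Finset.mul_sum]
    refine Finset.sum_le_sum fun t _ => ?_
    have h1 : xhat t - xpi t = (xhat t - (if t = 0 then xhat 0 else θ (t - 1)))
        - (xpi t - (if t = 0 then xhat 0 else θ (t - 1))) := by abel
    have h2 : ‖xhat t - xpi t‖ ≤ ‖xhat t - (if t = 0 then xhat 0 else θ (t - 1))‖
        + ‖xpi t - (if t = 0 then xhat 0 else θ (t - 1))‖ := by
      rw [h1]; exact norm_sub_le _ _
    have := hcontr t
    simp only [hedef]
    linarith
  have hsplit : ∑ t ∈ Finset.range (T + 1), (‖A‖ * d t + ‖B‖ * v t)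
      = ‖A‖ * ∑ t ∈ Finset.range (T + 1), d t + ‖B‖ * ∑ t ∈ Finset.range (T + 1), v t := by
    rw [Finset.sum_add_distrib, Finset.mul_sum, Finset.mul_sum]
  rw [hsplit] at hsum
  set D := ∑ t ∈ Finset.range (T + 1), d t with hD
  set V := ∑ t ∈ Finset.range (T + 1), v t with hV
  set E := ∑ t ∈ Finset.range (T + 1), e t with hE
  have hEle : E ≤ (‖A‖ * D + ‖B‖ * V) / (1 - ‖A‖ * κ) := by
    rw [le_div_iff₀ hαpos]; linarith
  have hfin : ∑ t ∈ Finset.range (T + 1), ‖xhat t - xpi t‖ ≤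
      (1 + κ) * ((‖A‖ * D + ‖B‖ * V) / (1 - ‖A‖ * κ)) :=
    hmain.trans (mul_le_mul_of_nonneg_left hEle (by linarith))
  have heq : (1 + κ) * ((‖A‖ * D + ‖B‖ * V) / (1 - ‖A‖ * κ))
      = (1 + κ) * ‖A‖ / (1 - ‖A‖ * κ) * D + (1 + κ) * ‖B‖ / (1 - ‖A‖ * κ) * V := by
    simp only [div_eq_mul_inv]
    ring
  linarith [hfin, heq.symm.le, heq.le]
end
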